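/- arXiv:1909.02137 — 2 statements merged into one kernel-verified Lean document; each statement's English description precedes it below -/
import Mathlib

section
/- Let U ⊆ ℂ be open, let a, b, c, d ∈ ℂ with a·d − b·c = 1 and â, b̂, ĉ, d̂ ∈ ℂ with â·d̂ − b̂·ĉ = 1, and set γ(z) = (a·z+b)/(c·z+d), ρ(w) = (â·w+b̂)/(ĉ·w+d̂). Let f, F, g : ℂ → ℂ be analytic on U such that for all z ∈ U with c·z+d ≠ 0: γ(z) ∈ U, g(γ(z)) = g(z), ĉ·f(z)+d̂ ≠ 0 and f(γ(z)) = ρ(f(z)), and ĉ·F(z)+d̂ ≠ 0 and F(γ(z)) = ρ(F(z)). Define ḟ(z) = f'(z)/g'(z), f̈(z) = (ḟ)'(z)/g'(z), and h(z) = ḟ(z)/(F(z) − f(z)) + f̈(z)/(2·ḟ(z)). Then for every z ∈ U such that c·z+d ≠ 0, g'(z) ≠ 0, g'(γ(z)) ≠ 0, ḟ ≠ 0 and F ≠ f at both z and γ(z), one has h(γ(z)) = h(z). -/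
/-!
Differentiating `g ∘ γ = g` shows that the derivative with respect to `g`, `D k = k' / g'`,
commutes with `γ`: `(D k) ∘ γ = D (k ∘ γ)`. Applying `D` to `f ∘ γ = ρ ∘ f` gives
`ḟ ∘ γ = ρ'(f) ḟ` with `ρ'(w) = (ĉ w + d̂)⁻²`, and applying it once more gives
`f̈ ∘ γ = ρ''(f) ḟ² + ρ'(f) f̈`. Since `ρ(F) − ρ(f) = (F − f) / ((ĉ F + d̂)(ĉ f + d̂))`,
the extra term `−ĉ ḟ / (ĉ f + d̂)` that `ρ''` contributes to `f̈ / (2 ḟ)` cancels exactly the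
change of `ḟ / (F − f)`.
-/

open Filter Topology

theorem mobius_sub_mobius {K : Type*} [Field K] {a b c d w u : K} (hdet : a * d - b * c = 1)
    (hw : c * w + d ≠ 0) (hu : c * u + d ≠ 0) :
    (a * w + b) / (c * w + d) - (a * u + b) / (c * u + d) =
      (w - u) / ((c * w + d) * (c * u + d)) := by
  rw [div_sub_div _ _ hw hu]
  congr 1
  linear_combination (w - u) * hdet

section

variable {𝕜 : Type*} [NontriviallyNormedField 𝕜] {a b c d z : 𝕜}

theorem hasDerivAt_affine (c d z : 𝕜) : HasDerivAt (fun z => c * z + d) c z :=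
  (((hasDerivAt_id z).const_mul c).add_const d).congr_deriv (mul_one c)

theorem hasDerivAt_mobius (hdet : a * d - b * c = 1) (hz : c * z + d ≠ 0) :
    HasDerivAt (fun z => (a * z + b) / (c * z + d)) ((c * z + d) ^ 2)⁻¹ z :=
  ((hasDerivAt_affine a b z).div (hasDerivAt_affine c d z) hz).congr_deriv <| by
    rw [inv_eq_one_div, ← hdet]
    ring

theorem hasDerivAt_inv_sq_affine (hz : c * z + d ≠ 0) :
    HasDerivAt (fun z => ((c * z + d) ^ 2)⁻¹) (-2 * c / (c * z + d) ^ 3) z :=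
  (((hasDerivAt_affine c d z).pow 2).inv (pow_ne_zero 2 hz)).congr_deriv <| by
    simp only [Pi.pow_apply]
    field_simp
    ring

variable {γ g k m f : 𝕜 → 𝕜} {γ' : 𝕜}

theorem deriv_div_deriv_comp_of_eventuallyEq (hγ : HasDerivAt γ γ' z) (hγ' : γ' ≠ 0)
    (hg : DifferentiableAt 𝕜 g (γ z)) (hk : DifferentiableAt 𝕜 k (γ z))
    (hgγ : g ∘ γ =ᶠ[𝓝 z] g) (hkγ : k ∘ γ =ᶠ[𝓝 z] m) :
    deriv k (γ z) / deriv g (γ z) = deriv m z / deriv g z := by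
  rw [← hkγ.deriv_eq, ← hgγ.deriv_eq, deriv_comp z hk hγ.differentiableAt,
    deriv_comp z hg hγ.differentiableAt, hγ.deriv, mul_div_mul_right _ _ hγ']

theorem deriv_div_deriv_comp_of_eventuallyEq_mobius (hdet : a * d - b * c = 1)
    (hγ : HasDerivAt γ γ' z) (hγ' : γ' ≠ 0) (hg : DifferentiableAt 𝕜 g (γ z))
    (hf_γ : DifferentiableAt 𝕜 f (γ z)) (hf : DifferentiableAt 𝕜 f z) (hfz : c * f z + d ≠ 0)
    (hgγ : g ∘ γ =ᶠ[𝓝 z] g) (hfγ : f ∘ γ =ᶠ[𝓝 z] fun w => (a * f w + b) / (c * f w + d)) :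
    deriv f (γ z) / deriv g (γ z) = ((c * f z + d) ^ 2)⁻¹ * (deriv f z / deriv g z) := by
  have hρf : HasDerivAt (fun w => (a * f w + b) / (c * f w + d))
      (((c * f z + d) ^ 2)⁻¹ * deriv f z) z :=
    (hasDerivAt_mobius hdet hfz).comp z hf.hasDerivAt
  rw [deriv_div_deriv_comp_of_eventuallyEq hγ hγ' hg hf_γ hgγ hfγ, hρf.deriv, mul_div_assoc]

theorem deriv_div_deriv_comp_of_eventuallyEq_inv_sq_mul
    (hγ : HasDerivAt γ γ' z) (hγ' : γ' ≠ 0) (hg : DifferentiableAt 𝕜 g (γ z))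
    (hk_γ : DifferentiableAt 𝕜 k (γ z)) (hk : DifferentiableAt 𝕜 k z)
    (hf : DifferentiableAt 𝕜 f z) (hfz : c * f z + d ≠ 0)
    (hgγ : g ∘ γ =ᶠ[𝓝 z] g) (hkγ : k ∘ γ =ᶠ[𝓝 z] fun w => ((c * f w + d) ^ 2)⁻¹ * k w) :
    deriv k (γ z) / deriv g (γ z) =
      -2 * c / (c * f z + d) ^ 3 * (deriv f z / deriv g z) * k z +
        ((c * f z + d) ^ 2)⁻¹ * (deriv k z / deriv g z) := by
  have hm : HasDerivAt (fun w => ((c * f w + d) ^ 2)⁻¹ * k w)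
      (-2 * c / (c * f z + d) ^ 3 * deriv f z * k z + ((c * f z + d) ^ 2)⁻¹ * deriv k z) z :=
    ((hasDerivAt_inv_sq_affine hfz).comp z hf.hasDerivAt).mul hk.hasDerivAt
  rw [deriv_div_deriv_comp_of_eventuallyEq hγ hγ' hg hk_γ hgγ hkγ, hm.deriv]
  ring

end

-- The left-hand side is `h ∘ γ` after substituting the transformation laws of `ḟ` and `f̈`.
theorem mobius_jet_identity {K : Type*} [Field K] [NeZero (2 : K)] {a b c d w u p q : K}
    (hdet : a * d - b * c = 1) (hw : c * w + d ≠ 0) (hu : c * u + d ≠ 0) (hwu : w ≠ u)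
    (hp : p ≠ 0) :
    ((c * u + d) ^ 2)⁻¹ * p / ((a * w + b) / (c * w + d) - (a * u + b) / (c * u + d)) +
        (-2 * c / (c * u + d) ^ 3 * p * p + ((c * u + d) ^ 2)⁻¹ * q) /
          (2 * (((c * u + d) ^ 2)⁻¹ * p)) =
      p / (w - u) + q / (2 * p) := by
  have hwu' : w - u ≠ 0 := sub_ne_zero.mpr hwu
  rw [mobius_sub_mobius hdet hw hu]
  field_simp
  ring

theorem invariant_of_equivariant_pair_general
    (U : Set ℂ) (hU : IsOpen U)
    (a b c d ah bh ch dh : ℂ)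
    (hdet : a * d - b * c = 1) (hdet' : ah * dh - bh * ch = 1)
    (γ ρ : ℂ → ℂ)
    (hγ : γ = fun z => (a * z + b) / (c * z + d))
    (hρ : ρ = fun w => (ah * w + bh) / (ch * w + dh))
    (f F g : ℂ → ℂ)
    (hf : AnalyticOnNhd ℂ f U) (hg : AnalyticOnNhd ℂ g U)
    (hmaps : ∀ z ∈ U, c * z + d ≠ 0 → γ z ∈ U)
    (hgi : ∀ z ∈ U, c * z + d ≠ 0 → g (γ z) = g z)
    (hfden : ∀ z ∈ U, c * z + d ≠ 0 → ch * f z + dh ≠ 0)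
    (hfe : ∀ z ∈ U, c * z + d ≠ 0 → f (γ z) = ρ (f z))
    (hFden : ∀ z ∈ U, c * z + d ≠ 0 → ch * F z + dh ≠ 0)
    (hFe : ∀ z ∈ U, c * z + d ≠ 0 → F (γ z) = ρ (F z))
    (fd fdd h : ℂ → ℂ)
    (hfd : ∀ z, fd z = deriv f z / deriv g z)
    (hfdd : ∀ z, fdd z = deriv fd z / deriv g z)
    (hh : ∀ z, h z = fd z / (F z - f z) + fdd z / (2 * fd z)) :
    ∀ z ∈ U, c * z + d ≠ 0 → deriv g z ≠ 0 → deriv g (γ z) ≠ 0 →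
      fd z ≠ 0 → fd (γ z) ≠ 0 → F z ≠ f z → F (γ z) ≠ f (γ z) →
      h (γ z) = h z := by
  intro z hzU hz hgz hgγz hfdz _ hFfz _
  set V := {w | w ∈ U ∧ c * w + d ≠ 0}
  have hV : IsOpen V := hU.inter (isOpen_ne_fun (by fun_prop) continuous_const)
  have hγ' : ∀ w ∈ V, HasDerivAt γ ((c * w + d) ^ 2)⁻¹ w := fun w hw =>
    hγ ▸ hasDerivAt_mobius hdet hw.2
  have hγ'_ne : ∀ w ∈ V, ((c * w + d) ^ 2)⁻¹ ≠ 0 := fun w hw => inv_ne_zero (pow_ne_zero 2 hw.2)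
  have hgγ : ∀ w ∈ V, g ∘ γ =ᶠ[𝓝 w] g := fun w hw =>
    eventually_of_mem (hV.mem_nhds hw) fun x hx => hgi x hx.1 hx.2
  have hfγ : ∀ w ∈ V, f ∘ γ =ᶠ[𝓝 w] fun x => (ah * f x + bh) / (ch * f x + dh) := fun w hw =>
    eventually_of_mem (hV.mem_nhds hw) fun x hx => (hfe x hx.1 hx.2).trans (congrFun hρ (f x))
  have hfd_γ : ∀ w ∈ V, fd (γ w) = ((ch * f w + dh) ^ 2)⁻¹ * fd w := fun w hw => by
    simpa only [← hfd] using deriv_div_deriv_comp_of_eventuallyEq_mobius hdet' (hγ' w hw)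
      (hγ'_ne w hw) (hg _ (hmaps w hw.1 hw.2)).differentiableAt
      (hf _ (hmaps w hw.1 hw.2)).differentiableAt (hf w hw.1).differentiableAt
      (hfden w hw.1 hw.2) (hgγ w hw) (hfγ w hw)
  have hfd_diff : ∀ w ∈ U, deriv g w ≠ 0 → DifferentiableAt ℂ fd w := fun w hw hgw =>
    funext hfd ▸ (hf.deriv w hw).differentiableAt.div (hg.deriv w hw).differentiableAt hgw
  have hfdd_γ : fdd (γ z) = -2 * ch / (ch * f z + dh) ^ 3 * fd z * fd z +
      ((ch * f z + dh) ^ 2)⁻¹ * fdd z := by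
    simpa only [← hfd, ← hfdd] using deriv_div_deriv_comp_of_eventuallyEq_inv_sq_mul
      (hγ' z ⟨hzU, hz⟩) (hγ'_ne z ⟨hzU, hz⟩) (hg _ (hmaps z hzU hz)).differentiableAt
      (hfd_diff _ (hmaps z hzU hz) hgγz) (hfd_diff z hzU hgz) (hf z hzU).differentiableAt
      (hfden z hzU hz) (hgγ z ⟨hzU, hz⟩) (eventually_of_mem (hV.mem_nhds ⟨hzU, hz⟩) hfd_γ)
  rw [hh, hh, hfd_γ z ⟨hzU, hz⟩, hfdd_γ, hfe z hzU hz, hFe z hzU hz, hρ]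
  exact mobius_jet_identity hdet' (hFden z hzU hz) (hfden z hzU hz) hFfz hfdz

/-- Inverse direction of the paper's Corollary 1: from two equivariant functions
`F ≠ f` and an invariant `g`, the function `h = ḟ/(F − f) + f̈/(2ḟ)` is invariant,
where `ḟ = df/dg`. -/
theorem invariant_of_equivariant_pair
    (U : Set ℂ) (hU : IsOpen U)
    (a b c d ah bh ch dh : ℂ)
    (hdet : a * d - b * c = 1) (hdet' : ah * dh - bh * ch = 1)
    (γ ρ : ℂ → ℂ)
    (hγ : γ = fun z => (a * z + b) / (c * z + d))
    (hρ : ρ = fun w => (ah * w + bh) / (ch * w + dh))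
    (f F g : ℂ → ℂ)
    (hf : AnalyticOnNhd ℂ f U) (hF : AnalyticOnNhd ℂ F U) (hg : AnalyticOnNhd ℂ g U)
    (hmaps : ∀ z ∈ U, c * z + d ≠ 0 → γ z ∈ U)
    (hgi : ∀ z ∈ U, c * z + d ≠ 0 → g (γ z) = g z)
    (hfden : ∀ z ∈ U, c * z + d ≠ 0 → ch * f z + dh ≠ 0)
    (hfe : ∀ z ∈ U, c * z + d ≠ 0 → f (γ z) = ρ (f z))
    (hFden : ∀ z ∈ U, c * z + d ≠ 0 → ch * F z + dh ≠ 0)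
    (hFe : ∀ z ∈ U, c * z + d ≠ 0 → F (γ z) = ρ (F z))
    (fd fdd h : ℂ → ℂ)
    (hfd : ∀ z, fd z = deriv f z / deriv g z)
    (hfdd : ∀ z, fdd z = deriv fd z / deriv g z)
    (hh : ∀ z, h z = fd z / (F z - f z) + fdd z / (2 * fd z)) :
    ∀ z ∈ U, c * z + d ≠ 0 → deriv g z ≠ 0 → deriv g (γ z) ≠ 0 →
      fd z ≠ 0 → fd (γ z) ≠ 0 → F z ≠ f z → F (γ z) ≠ f (γ z) →
      h (γ z) = h z :=
  invariant_of_equivariant_pair_general U hU a b c d ah bh ch dh hdet hdet' γ ρ hγ hρ f F g hf hg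
    hmaps hgi hfden hfe hFden hFe fd fdd h hfd hfdd hh
end

section
/- Let f : ℂ → ℂ be analytic at z with f'(z) ≠ 0 and f''(z) ≠ 0, set s = S f (the Schwarzian derivative, analytic near z), and assume s(z) ≠ 0. Let f̂ = D f, i.e. f̂(w) = f(w) − 2·f'(w)²/f''(w) near z. If f̂''(z) − f̂'(z)·s'(z)/s(z) ≠ 0, then f̂(z) − 2·f̂'(z)²/(f̂''(z) − f̂'(z)·s'(z)/s(z)) = f(z). -/
/-!
With `g = 2 f'^3 / f''^2`, the derivative of `f̂ = D f` factors as `f̂' = g · S f`. Differentiating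
this product, the logarithmic-derivative correction cancels the `g · (S f)'` term, so the
denominator `f̂'' − f̂' s'/s` is `g' · S f`, and `g' = −4 f'^4 S f / f''^3` has the Schwarzian as a
factor once more. Substituting, `2 f̂'^2 / (g' · S f) = −2 f'^2 / f''`, which undoes `D`.
-/

open Filter Topology

/-- The Schwarzian derivative `S f (z) = f'''(z)/f'(z) − (3/2)·(f''(z)/f'(z))²`. -/
noncomputable def schwarzian (f : ℂ → ℂ) (z : ℂ) : ℂ :=
  deriv (deriv (deriv f)) z / deriv f z - (3 / 2) * (deriv (deriv f) z / deriv f z) ^ 2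

noncomputable def equivariantDeriv (f : ℂ → ℂ) (w : ℂ) : ℂ :=
  f w - 2 * deriv f w ^ 2 / deriv (deriv f) w

theorem deriv_deriv_sub_mul_logDeriv_of_deriv_eq_mul {𝕜 : Type*} [NontriviallyNormedField 𝕜]
    {F g s : 𝕜 → 𝕜} {z : 𝕜} (hF : deriv F =ᶠ[𝓝 z] fun w => g w * s w)
    (hg : DifferentiableAt 𝕜 g z) (hs : DifferentiableAt 𝕜 s z) (hsz : s z ≠ 0) :
    deriv (deriv F) z - deriv F z * deriv s z / s z = deriv g z * s z := by
  rw [hF.deriv_eq, hF.eq_of_nhds, deriv_fun_mul hg hs]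
  field_simp
  ring

theorem hasDerivAt_equivariantDeriv {f : ℂ → ℂ} {w : ℂ} (h₀ : DifferentiableAt ℂ f w)
    (h₁ : DifferentiableAt ℂ (deriv f) w) (h₂ : DifferentiableAt ℂ (deriv (deriv f)) w)
    (hf'' : deriv (deriv f) w ≠ 0) :
    HasDerivAt (equivariantDeriv f)
      (2 * deriv f w ^ 3 / deriv (deriv f) w ^ 2 * schwarzian f w) w := by
  refine (h₀.hasDerivAt.sub
    (((h₁.hasDerivAt.pow 2).const_mul 2).div h₂.hasDerivAt hf'')).congr_deriv ?_
  simp only [schwarzian, Pi.pow_apply]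
  field_simp
  ring

theorem deriv_equivariantDeriv_eventuallyEq {f : ℂ → ℂ} {z : ℂ} (hf : AnalyticAt ℂ f z)
    (hf'' : deriv (deriv f) z ≠ 0) :
    deriv (equivariantDeriv f) =ᶠ[𝓝 z]
      fun w => 2 * deriv f w ^ 3 / deriv (deriv f) w ^ 2 * schwarzian f w := by
  filter_upwards [hf.eventually_analyticAt, hf.deriv.deriv.continuousAt.eventually_ne hf'']
    with w hw hw''
  exact (hasDerivAt_equivariantDeriv hw.differentiableAt hw.deriv.differentiableAt
    hw.deriv.deriv.differentiableAt hw'').deriv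

theorem hasDerivAt_two_mul_deriv_pow_three_div {f : ℂ → ℂ} {z : ℂ}
    (h₁ : DifferentiableAt ℂ (deriv f) z) (h₂ : DifferentiableAt ℂ (deriv (deriv f)) z)
    (hf'' : deriv (deriv f) z ≠ 0) :
    HasDerivAt (fun w => 2 * deriv f w ^ 3 / deriv (deriv f) w ^ 2)
      (-4 * deriv f z ^ 4 / deriv (deriv f) z ^ 3 * schwarzian f z) z := by
  refine (((h₁.hasDerivAt.pow 3).const_mul 2).div (h₂.hasDerivAt.pow 2)
    (pow_ne_zero 2 hf'')).congr_deriv ?_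
  simp only [schwarzian, Pi.pow_apply]
  field_simp
  ring

theorem AnalyticAt.schwarzian {f : ℂ → ℂ} {z : ℂ} (hf : AnalyticAt ℂ f z)
    (hf' : deriv f z ≠ 0) : AnalyticAt ℂ (schwarzian f) z :=
  (hf.deriv.deriv.deriv.div hf.deriv hf').sub
    (analyticAt_const.mul ((hf.deriv.deriv.div hf.deriv hf').pow 2))

theorem D_duality_general
    (f fhat s : ℂ → ℂ) (z : ℂ)
    (hf : AnalyticAt ℂ f z)
    (hf' : deriv f z ≠ 0) (hf'' : deriv (deriv f) z ≠ 0)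
    (hs : s = fun w => schwarzian f w) (hsz : s z ≠ 0)
    (hfhat : fhat = fun w => f w - 2 * (deriv f w) ^ 2 / deriv (deriv f) w) :
    fhat z - 2 * (deriv fhat z) ^ 2
        / (deriv (deriv fhat) z - deriv fhat z * deriv s z / s z) = f z := by
  obtain rfl : fhat = equivariantDeriv f := hfhat
  obtain rfl : s = schwarzian f := hs
  have hderiv := deriv_equivariantDeriv_eventuallyEq hf hf''
  have hg := hasDerivAt_two_mul_deriv_pow_three_div hf.deriv.differentiableAt
    hf.deriv.deriv.differentiableAt hf''
  rw [deriv_deriv_sub_mul_logDeriv_of_deriv_eq_mul hderiv hg.differentiableAt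
    (hf.schwarzian hf').differentiableAt hsz, hderiv.eq_of_nhds, hg.deriv, equivariantDeriv]
  field_simp
  ring

/-- The duality identity `D_{𝒮_θ f} ∘ D_θ (f) = f` of the paper's Proposition on 𝒟 and 𝒮:
the 𝒟-operator with respect to the dual 1-form (proportional to `S f · dz`) applied to
`f̂ = D f` recovers `f`. -/
theorem D_duality
    (f fhat s : ℂ → ℂ) (z : ℂ)
    (hf : AnalyticAt ℂ f z)
    (hf' : deriv f z ≠ 0) (hf'' : deriv (deriv f) z ≠ 0)
    (hs : s = fun w => schwarzian f w) (hsz : s z ≠ 0)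
    (hfhat : fhat = fun w => f w - 2 * (deriv f w) ^ 2 / deriv (deriv f) w)
    (hden : deriv (deriv fhat) z - deriv fhat z * deriv s z / s z ≠ 0) :
    fhat z - 2 * (deriv fhat z) ^ 2
        / (deriv (deriv fhat) z - deriv fhat z * deriv s z / s z) = f z :=
  D_duality_general f fhat s z hf hf' hf'' hs hsz hfhat
end
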